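/- arXiv:2601.03919 — 2 statements merged into one kernel-verified Lean document; each statement's English description precedes it below -/
import Mathlib

section
/- Let φ ∈ L¹(ℝ) and let t₁, ..., t_N be points with pairwise separation |t_i - t_j| ≥ L for i ≠ j, and let a_1, ..., a_N ≥ 0. Set W_i = [t_i - L/4, t_i + L/4]. Then ∑_{i=1}^N ∫_{W_i} |∑_{j=1}^N a_j φ(t - t_j)| dt ≥ (‖φ‖_{L¹} - 2∫_{|s| ≥ L/4} |φ(s)| ds)·∑_{i=1}^N a_i. -/
open MeasureTheory Finset

/-- Near-additivity of the `L¹` norm of sums of well-separated translates of an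
integrable kernel: with windows `W_i = [t_i - L/4, t_i + L/4]` around `L`-separated
points and nonnegative weights `a_i`,
`∑_i ∫_{W_i} |∑_j a_j φ(t - t_j)| ≥ (‖φ‖₁ - 2∫_{|s|≥L/4}|φ|)·∑_i a_i`. -/
theorem separated_translates_near_additivity (φ : ℝ → ℝ) (hφ : Integrable φ)
    (N : ℕ) (t : Fin N → ℝ) (L : ℝ) (hL : 0 < L)
    (hsep : ∀ i j : Fin N, i ≠ j → L ≤ |t i - t j|)
    (a : Fin N → ℝ) (ha : ∀ i, 0 ≤ a i) :
    ((∫ s : ℝ, |φ s|) - 2 * ∫ s in {s : ℝ | L / 4 ≤ |s|}, |φ s|) * ∑ i, a i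
      ≤ ∑ i, ∫ x in Set.Icc (t i - L / 4) (t i + L / 4),
          |∑ j, a j * φ (x - t j)| := by
  set r : ℝ := L / 4 with hr_def
  have hr : 0 < r := by positivity
  set W : Fin N → Set ℝ := fun i => Set.Icc (t i - r) (t i + r) with hW
  have hWm : ∀ i, MeasurableSet (W i) := fun i => measurableSet_Icc
  set T : ℝ := ∫ s : ℝ, |φ s| with hT
  set I : ℝ := ∫ s in {s : ℝ | r ≤ |s|}, |φ s| with hI
  set K : ℝ := ∫ x in Set.Icc (-r) r, |φ x| with hK_def
  -- integrability facts
  have hφj : ∀ c : ℝ, Integrable (fun x => |φ (x - c)|) := fun c =>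
    (hφ.comp_sub_right c).abs
  have hdisj : Pairwise (Function.onFun Disjoint W) := by
    intro i j hij
    rw [Function.onFun, Set.disjoint_left]
    intro x hxi hxj
    have hsep' := hsep i j hij
    simp only [hW, Set.mem_Icc] at hxi hxj
    have h2 : |t i - t j| ≤ r + r := by
      rw [abs_sub_le_iff]; constructor <;> linarith
    linarith
  -- translation identity
  have htrans : ∀ (f : ℝ → ℝ) (c : ℝ),
      ∫ x in Set.Icc (c - r) (c + r), f (x - c) = ∫ x in Set.Icc (-r) r, f x := by
    intro f c
    rw [MeasureTheory.integral_Icc_eq_integral_Ioc, MeasureTheory.integral_Icc_eq_integral_Ioc,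
      ← intervalIntegral.integral_of_le (by linarith : (c - r) ≤ c + r),
      ← intervalIntegral.integral_of_le (by linarith : (-r) ≤ r),
      intervalIntegral.integral_comp_sub_right]
    ring_nf
  -- K bound: T - I ≤ K
  have hKbd : T - I ≤ K := by
    have hsplit : T = K + ∫ x in (Set.Icc (-r) r)ᶜ, |φ x| :=
      (integral_add_compl measurableSet_Icc hφ.abs).symm
    have hsub : ∫ x in (Set.Icc (-r) r)ᶜ, |φ x| ≤ I := by
      apply setIntegral_mono_set hφ.abs.integrableOn
        (Filter.Eventually.of_forall fun x => abs_nonneg _)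
      apply HasSubset.Subset.eventuallyLE
      intro x hx
      simp only [Set.mem_compl_iff, Set.mem_Icc, not_and_or, not_le] at hx
      simp only [Set.mem_setOf_eq]
      rcases hx with h | h
      · rw [abs_of_neg (by linarith)]; linarith
      · rw [abs_of_pos (by linarith)]; linarith
    linarith
  -- pointwise key inequality
  set S : ℝ → ℝ := fun x => ∑ j, a j * φ (x - t j) with hS_def
  set g : ℝ → ℝ := fun x => ∑ j, a j * |φ (x - t j)| with hg_def
  have hSint : Integrable S := integrable_finset_sum _ fun j _ =>
    (hφ.comp_sub_right (t j)).const_mul (a j)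
  have hgint : Integrable g := integrable_finset_sum _ fun j _ =>
    (hφj (t j)).const_mul (a j)
  have key : ∀ (i : Fin N) (x : ℝ), 2 * (a i * |φ (x - t i)|) - g x ≤ |S x| := by
    intro i x
    have h0 : a i * φ (x - t i) = S x - ∑ j ∈ univ.erase i, a j * φ (x - t j) := by
      rw [eq_sub_iff_add_eq]
      exact Finset.add_sum_erase univ (fun j => a j * φ (x - t j)) (mem_univ i)
    have h1 : |a i * φ (x - t i)| ≤ |S x| + |∑ j ∈ univ.erase i, a j * φ (x - t j)| := by
      rw [h0]; exact abs_sub _ _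
    have h2 : |∑ j ∈ univ.erase i, a j * φ (x - t j)|
        ≤ ∑ j ∈ univ.erase i, a j * |φ (x - t j)| := by
      refine (Finset.abs_sum_le_sum_abs _ _).trans_eq ?_
      exact Finset.sum_congr rfl fun j _ => by rw [abs_mul, abs_of_nonneg (ha j)]
    have h3 : ∑ j ∈ univ.erase i, a j * |φ (x - t j)| = g x - a i * |φ (x - t i)| := by
      rw [Finset.sum_erase_eq_sub (mem_univ i)]
    have h4 : |a i * φ (x - t i)| = a i * |φ (x - t i)| := by
      rw [abs_mul, abs_of_nonneg (ha i)]
    linarith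
  -- per-window bound
  have stepA : ∀ i : Fin N,
      2 * (a i * K) - ∑ j, a j * ∫ x in W i, |φ (x - t j)| ≤ ∫ x in W i, |S x| := by
    intro i
    have hmono : ∫ x in W i, (2 * (a i * |φ (x - t i)|) - g x) ≤ ∫ x in W i, |S x| := by
      refine setIntegral_mono ?_ hSint.abs.integrableOn fun x => key i x
      exact (((hφj (t i)).const_mul (a i)).const_mul 2).sub hgint |>.integrableOn
    have heq : ∫ x in W i, (2 * (a i * |φ (x - t i)|) - g x)
        = 2 * (a i * ∫ x in W i, |φ (x - t i)|) - ∑ j, a j * ∫ x in W i, |φ (x - t j)| := by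
      rw [integral_sub (((((hφj (t i)).const_mul (a i)).const_mul 2)).integrableOn)
        hgint.integrableOn]
      congr 1
      · rw [MeasureTheory.integral_const_mul, MeasureTheory.integral_const_mul]
      · rw [hg_def]
        rw [integral_finset_sum _ fun j _ => ((hφj (t j)).const_mul (a j)).integrableOn]
        exact Finset.sum_congr rfl fun j _ => MeasureTheory.integral_const_mul _ _
    have hKi : ∫ x in W i, |φ (x - t i)| = K := htrans (fun y => |φ y|) (t i)
    rw [heq, hKi] at hmono
    exact hmono
  -- cross-term bound
  have cross : ∀ j : Fin N, ∑ i, ∫ x in W i, |φ (x - t j)| ≤ T := by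
    intro j
    have hU := MeasureTheory.integral_iUnion hWm hdisj (hφj (t j)).integrableOn
    rw [tsum_fintype] at hU
    rw [← hU]
    have hle := setIntegral_le_integral (hφj (t j))
      (Filter.Eventually.of_forall fun x => abs_nonneg _) (s := ⋃ i, W i)
    calc ∫ x in ⋃ i, W i, |φ (x - t j)| ≤ ∫ x, |φ (x - t j)| := hle
      _ = T := by rw [hT]; exact integral_sub_right_eq_self (fun y => |φ y|) (t j)
  -- put it together
  have hsum : ∑ i, (2 * (a i * K) - ∑ j, a j * ∫ x in W i, |φ (x - t j)|)
      ≤ ∑ i, ∫ x in W i, |S x| := Finset.sum_le_sum fun i _ => stepA i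
  have hswap : ∑ i : Fin N, ∑ j : Fin N, a j * ∫ x in W i, |φ (x - t j)|
      = ∑ j : Fin N, a j * ∑ i : Fin N, ∫ x in W i, |φ (x - t j)| := by
    rw [Finset.sum_comm]
    exact Finset.sum_congr rfl fun j _ => (Finset.mul_sum _ _ _).symm
  have hcross2 : ∑ j : Fin N, a j * ∑ i : Fin N, ∫ x in W i, |φ (x - t j)|
      ≤ (∑ j, a j) * T := by
    rw [Finset.sum_mul]
    exact Finset.sum_le_sum fun j _ => mul_le_mul_of_nonneg_left (cross j) (ha j)
  have hsum' : ∑ i, (2 * (a i * K) - ∑ j, a j * ∫ x in W i, |φ (x - t j)|)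
      = 2 * K * (∑ i, a i) - ∑ i : Fin N, ∑ j : Fin N, a j * ∫ x in W i, |φ (x - t j)| := by
    rw [Finset.sum_sub_distrib]
    congr 1
    rw [Finset.mul_sum]
    exact Finset.sum_congr rfl fun i _ => by ring
  have hanneg : 0 ≤ ∑ i, a i := Finset.sum_nonneg fun i _ => ha i
  have hfinal : (T - 2 * I) * ∑ i, a i ≤ 2 * K * (∑ i, a i) - (∑ j, a j) * T := by
    nlinarith [mul_le_mul_of_nonneg_right hKbd hanneg]
  calc (T - 2 * I) * ∑ i, a i
      ≤ 2 * K * (∑ i, a i) - (∑ j, a j) * T := hfinal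
    _ ≤ 2 * K * (∑ i, a i)
        - ∑ i : Fin N, ∑ j : Fin N, a j * ∫ x in W i, |φ (x - t j)| := by
        rw [hswap]; linarith
    _ = ∑ i, (2 * (a i * K) - ∑ j, a j * ∫ x in W i, |φ (x - t j)|) := hsum'.symm
    _ ≤ ∑ i, ∫ x in W i, |S x| := hsum
end

section
/- Fix λ ≥ 1, c₀ > 0, ε = c₀/λ, and a nonempty box B = ∏_j [ℓ_j, u_j] ⊂ ℝ^d. Let X be a random vector in ℝ^d whose law satisfies the tube-mass condition P(dist(X, ∂B) ≤ t) ≤ C t^β for all t ∈ (0, t₀], for some constants C, β, t₀ > 0. Let S_B be the barrier score S_B(x) = ∏_j ϑ_{λ,ε}(u_j - x_j) ϑ_{λ,ε}(x_j - ℓ_j) built from a barrier ϑ_{λ,ε} with ϑ_{λ,ε}(t) = 1 for t ≥ 0, ϑ_{λ,ε}(t) = e^{λt} for t ≤ -ε, and ϑ_{λ,ε} nondecreasing with values in [0,1]. Then E[|S_B(X) - 1_B(X)|] ≤ (C(dc₀)^β + e^{dc₀}(C·Γ(β+1) + C')) · λ^{-β}, where C' depends only on β and t₀; in particular the L¹ calibration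 error decays polynomially in λ at rate β. -/
/-!
Off the box, the coordinate factor of the score is at most `exp (c₀ - λ · overhang)`, and the
`ℓ¹` overhang dominates the Euclidean distance to the coordinatewise projection onto the box,
hence to its frontier; so `|S_B - 1_B| ≤ exp (d c₀) · exp (-λ · dist (X, ∂B))`. Extending the
tube-mass bound to all `t > 0` with constant `C + t₀ ^ (-β)`, the layer-cake formula and the
substitution `s = exp (-x)` give `E exp (-λ · dist (X, ∂B)) ≤ (C + t₀ ^ (-β)) Γ(β + 1) λ ^ (-β)`,
which is the bound with `C' = t₀ ^ (-β) Γ(β + 1)`.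
-/

open MeasureTheory Finset Real Metric

theorem IsPreconnected.inter_frontier_nonempty {X : Type*} [TopologicalSpace X] {s t : Set X}
    (hs : IsPreconnected s) (hst : (s ∩ t).Nonempty) (hs_diff : (s \ t).Nonempty) :
    (s ∩ frontier t).Nonempty := by
  by_contra h
  have hsub : s ⊆ interior t ∪ (closure t)ᶜ := fun x hx => by
    by_cases hi : x ∈ interior t
    · exact Or.inl hi
    · exact Or.inr fun hc => h ⟨x, hx, hc, hi⟩
  rcases hs.subset_or_subset isOpen_interior isClosed_closure.isOpen_compl
    (Set.disjoint_compl_right_iff_subset.mpr interior_subset_closure) hsub with hint | hext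
  · obtain ⟨x, hxs, hxt⟩ := hs_diff
    exact hxt (interior_subset (hint hxs))
  · obtain ⟨x, hxs, hxt⟩ := hst
    exact hext hxs (subset_closure hxt)

theorem Metric.infDist_frontier_le_dist_of_notMem_of_mem {E : Type*} [NormedAddCommGroup E]
    [NormedSpace ℝ E] {s : Set E} {x y : E} (hx : x ∉ s) (hy : y ∈ s) :
    infDist x (frontier s) ≤ dist x y := by
  obtain ⟨z, hz, hzs⟩ := (convex_segment x y).isPreconnected.inter_frontier_nonempty
    ⟨y, right_mem_segment ℝ x y, hy⟩ ⟨x, left_mem_segment ℝ x y, hx⟩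
  calc infDist x (frontier s) ≤ dist x z := infDist_le_dist_of_mem hzs
    _ ≤ dist x y := by
      rw [← dist_add_dist_of_mem_segment hz]
      exact le_add_of_nonneg_right dist_nonneg

theorem EuclideanSpace.dist_le_sum_dist {ι : Type*} [Fintype ι] (x y : EuclideanSpace ℝ ι) :
    dist x y ≤ ∑ i, dist (x i) (y i) := by
  rw [EuclideanSpace.dist_eq, Real.sqrt_le_left (by positivity)]
  exact sum_sq_le_sq_sum_of_nonneg fun _ _ => dist_nonneg

theorem image_exp_neg_Ioi_zero : (fun x : ℝ => exp (-x)) '' Set.Ioi 0 = Set.Ioo 0 1 := by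
  ext t
  constructor
  · rintro ⟨x, hx, rfl⟩
    exact ⟨exp_pos _, exp_lt_one_iff.mpr (neg_lt_zero.mpr hx)⟩
  · rintro ⟨ht0, ht1⟩
    exact ⟨-log t, by simpa using log_neg ht0 ht1, by simp [exp_log ht0]⟩

theorem hasDerivWithinAt_exp_neg (x : ℝ) (s : Set ℝ) :
    HasDerivWithinAt (fun x => exp (-x)) (-exp (-x)) s x := by
  simpa using ((hasDerivAt_neg x).exp).hasDerivWithinAt

theorem injective_exp_neg : Function.Injective fun x : ℝ => exp (-x) :=
  fun _ _ h => neg_injective (exp_injective h)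

section ExpNegSubst

variable {E : Type*} [NormedAddCommGroup E] [NormedSpace ℝ E]

theorem integral_Ioo_zero_one_eq_integral_comp_exp_neg (g : ℝ → E) :
    ∫ s in Set.Ioo 0 1, g s = ∫ x in Set.Ioi 0, exp (-x) • g (exp (-x)) := by
  rw [← image_exp_neg_Ioi_zero, integral_image_eq_integral_abs_deriv_smul measurableSet_Ioi
    (fun x _ => hasDerivWithinAt_exp_neg x _) injective_exp_neg.injOn]
  simp [abs_of_pos (exp_pos _)]

theorem integrableOn_Ioo_zero_one_iff_comp_exp_neg (g : ℝ → E) :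
    IntegrableOn g (Set.Ioo 0 1) ↔ IntegrableOn (fun x => exp (-x) • g (exp (-x))) (Set.Ioi 0) := by
  rw [← image_exp_neg_Ioi_zero, integrableOn_image_iff_integrableOn_abs_deriv_smul measurableSet_Ioi
    (fun x _ => hasDerivWithinAt_exp_neg x _) injective_exp_neg.injOn]
  simp [abs_of_pos (exp_pos _)]

end ExpNegSubst

theorem integrableOn_neg_log_rpow {β : ℝ} (hβ : -1 < β) :
    IntegrableOn (fun s => (-log s) ^ β) (Set.Ioo 0 1) := by
  rw [integrableOn_Ioo_zero_one_iff_comp_exp_neg]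
  simpa using Real.GammaIntegral_convergent (s := β + 1) (by linarith)

theorem integral_neg_log_rpow {β : ℝ} (hβ : -1 < β) :
    ∫ s in Set.Ioo 0 1, (-log s) ^ β = Gamma (β + 1) := by
  rw [integral_Ioo_zero_one_eq_integral_comp_exp_neg, Gamma_eq_integral (by linarith)]
  simp

section Barrier

variable {ϑ : ℝ → ℝ} {lam c₀ : ℝ}

theorem barrier_le_exp (hlam : 0 < lam) (hc₀ : 0 ≤ c₀) (hϑ : ∀ t, ϑ t ≤ 1)
    (hexp : ∀ t, t ≤ -(c₀ / lam) → ϑ t = exp (lam * t)) (t : ℝ) :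
    ϑ t ≤ exp (c₀ + lam * t) := by
  rcases le_or_gt t (-(c₀ / lam)) with ht | ht
  · rw [hexp t ht]
    exact exp_le_exp.mpr (by linarith)
  · refine (hϑ t).trans (one_le_exp ?_)
    have := (lt_div_iff₀' hlam).mp (neg_lt.mp ht)
    linarith [mul_neg lam t]

theorem barrier_mul_barrier_le_exp (hϑ : ∀ t, ϑ t ∈ Set.Icc 0 1) (hone : ∀ t, 0 ≤ t → ϑ t = 1)
    (hc₀ : 0 ≤ c₀) (hbound : ∀ t, ϑ t ≤ exp (c₀ + lam * t)) {a b : ℝ} (hab : a ≤ b) (x : ℝ) :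
    ϑ (b - x) * ϑ (x - a) ≤ exp (c₀ - lam * dist x (Set.projIcc a b hab x)) := by
  rcases lt_or_ge x a with hxa | hax
  · rw [Set.projIcc_of_le_left _ hxa.le, hone _ (by linarith), one_mul, Real.dist_eq,
      abs_of_neg (by simpa using hxa)]
    convert hbound (x - a) using 2
    ring
  rcases le_or_gt x b with hxb | hbx
  · rw [Set.projIcc_of_mem _ ⟨hax, hxb⟩, dist_self, mul_zero, sub_zero]
    exact (mul_le_one₀ (hϑ _).2 (hϑ _).1 (hϑ _).2).trans (one_le_exp hc₀)
  · rw [Set.projIcc_of_right_le _ hbx.le, hone (x - a) (by linarith), mul_one, Real.dist_eq,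
      abs_of_pos (by simpa using hbx)]
    convert hbound (b - x) using 2
    ring

end Barrier

section Box

variable {d : ℕ}

def box (ℓ u : Fin d → ℝ) : Set (EuclideanSpace ℝ (Fin d)) :=
  {x | ∀ j, x j ∈ Set.Icc (ℓ j) (u j)}

noncomputable def boxProj {ℓ u : Fin d → ℝ} (hℓu : ∀ j, ℓ j ≤ u j) (x : EuclideanSpace ℝ (Fin d)) :
    EuclideanSpace ℝ (Fin d) :=
  WithLp.toLp 2 fun j => (Set.projIcc (ℓ j) (u j) (hℓu j) (x j) : ℝ)

theorem boxProj_mem {ℓ u : Fin d → ℝ} (hℓu : ∀ j, ℓ j ≤ u j) (x : EuclideanSpace ℝ (Fin d)) :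
    boxProj hℓu x ∈ box ℓ u :=
  fun j => (Set.projIcc (ℓ j) (u j) (hℓu j) (x j)).2

variable {ϑ : ℝ → ℝ} {lam c₀ : ℝ} {ℓ u : Fin d → ℝ}

theorem prod_barrier_eq_one_of_mem_box (hone : ∀ t, 0 ≤ t → ϑ t = 1)
    {x : EuclideanSpace ℝ (Fin d)} (hx : x ∈ box ℓ u) :
    ∏ j, ϑ (u j - x j) * ϑ (x j - ℓ j) = 1 :=
  prod_eq_one fun j _ => by
    rw [hone _ (sub_nonneg.mpr (hx j).2), hone _ (sub_nonneg.mpr (hx j).1), one_mul]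

theorem prod_barrier_le_exp_infDist (hϑ : ∀ t, ϑ t ∈ Set.Icc 0 1)
    (hone : ∀ t, 0 ≤ t → ϑ t = 1) (hlam : 0 ≤ lam) (hc₀ : 0 ≤ c₀)
    (hbound : ∀ t, ϑ t ≤ exp (c₀ + lam * t)) (hℓu : ∀ j, ℓ j ≤ u j)
    {x : EuclideanSpace ℝ (Fin d)} (hx : x ∉ box ℓ u) :
    ∏ j, ϑ (u j - x j) * ϑ (x j - ℓ j)
      ≤ exp (d * c₀) * exp (-(lam * infDist x (frontier (box ℓ u)))) := by
  have hdist : infDist x (frontier (box ℓ u)) ≤ ∑ j, dist (x j) (boxProj hℓu x j) :=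
    (infDist_frontier_le_dist_of_notMem_of_mem hx (boxProj_mem hℓu x)).trans
      (EuclideanSpace.dist_le_sum_dist _ _)
  calc ∏ j, ϑ (u j - x j) * ϑ (x j - ℓ j)
      ≤ ∏ j, exp (c₀ - lam * dist (x j) (boxProj hℓu x j)) :=
        prod_le_prod (fun j _ => mul_nonneg (hϑ _).1 (hϑ _).1)
          fun j _ => barrier_mul_barrier_le_exp hϑ hone hc₀ hbound (hℓu j) (x j)
    _ = exp (d * c₀ - lam * ∑ j, dist (x j) (boxProj hℓu x j)) := by
      rw [← exp_sum, sum_sub_distrib, ← mul_sum]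
      simp
    _ ≤ exp (d * c₀) * exp (-(lam * infDist x (frontier (box ℓ u)))) := by
      rw [← exp_add, exp_le_exp]
      nlinarith

theorem abs_prod_barrier_sub_indicator_le (hϑ : ∀ t, ϑ t ∈ Set.Icc 0 1)
    (hone : ∀ t, 0 ≤ t → ϑ t = 1) (hlam : 0 ≤ lam) (hc₀ : 0 ≤ c₀)
    (hbound : ∀ t, ϑ t ≤ exp (c₀ + lam * t)) (hℓu : ∀ j, ℓ j ≤ u j)
    (x : EuclideanSpace ℝ (Fin d)) :
    |∏ j, ϑ (u j - x j) * ϑ (x j - ℓ j) - (box ℓ u).indicator (fun _ => (1 : ℝ)) x|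
      ≤ exp (d * c₀) * exp (-(lam * infDist x (frontier (box ℓ u)))) := by
  by_cases hx : x ∈ box ℓ u
  · rw [prod_barrier_eq_one_of_mem_box hone hx, Set.indicator_of_mem hx, sub_self, abs_zero]
    positivity
  · rw [Set.indicator_of_notMem hx, sub_zero,
      abs_of_nonneg (prod_nonneg fun j _ => mul_nonneg (hϑ _).1 (hϑ _).1)]
    exact prod_barrier_le_exp_infDist hϑ hone hlam hc₀ hbound hℓu hx

end Box

section TailBound

variable {Ω : Type*} [MeasurableSpace Ω] {μ : Measure Ω} {D : Ω → ℝ} {β : ℝ}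

theorem measure_le_ofReal_add_rpow_mul_rpow [IsZeroOrProbabilityMeasure μ] {C t₀ : ℝ}
    (hC : 0 ≤ C) (hβ : 0 ≤ β) (ht₀ : 0 < t₀)
    (htube : ∀ t ∈ Set.Ioc 0 t₀, μ {ω | D ω ≤ t} ≤ ENNReal.ofReal (C * t ^ β))
    {t : ℝ} (ht : 0 < t) :
    μ {ω | D ω ≤ t} ≤ ENNReal.ofReal ((C + t₀ ^ (-β)) * t ^ β) := by
  rcases le_or_gt t t₀ with htt₀ | ht₀t
  · refine (htube t ⟨ht, htt₀⟩).trans (ENNReal.ofReal_le_ofReal ?_)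
    gcongr
    exact le_add_of_nonneg_right (by positivity)
  · refine prob_le_one.trans (ENNReal.one_le_ofReal.mpr ?_)
    calc (1 : ℝ) = t₀ ^ (-β) * t₀ ^ β := by rw [← rpow_add ht₀, neg_add_cancel, rpow_zero]
      _ ≤ (C + t₀ ^ (-β)) * t ^ β := by
        gcongr
        exact le_add_of_nonneg_left hC

theorem measure_lt_exp_neg_mul_le {K lam : ℝ} (hlam : 0 < lam)
    (htail : ∀ t, 0 < t → μ {ω | D ω ≤ t} ≤ ENNReal.ofReal (K * t ^ β))
    {s : ℝ} (hs : s ∈ Set.Ioo 0 1) :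
    μ {ω | s < exp (-(lam * D ω))} ≤ ENNReal.ofReal (K * lam ^ (-β) * (-log s) ^ β) := by
  have hlog : 0 < -log s := neg_pos.mpr (log_neg hs.1 hs.2)
  have hsub : {ω | s < exp (-(lam * D ω))} ⊆ {ω | D ω ≤ -log s / lam} := fun ω hω => by
    have := (log_lt_iff_lt_exp hs.1).mpr hω
    show D ω ≤ -log s / lam
    rw [le_div_iff₀' hlam]
    linarith
  refine (measure_mono hsub).trans ((htail _ (div_pos hlog hlam)).trans_eq ?_)
  rw [div_rpow hlog.le hlam.le, rpow_neg hlam.le]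
  ring_nf

theorem integral_exp_neg_mul_le {K lam : ℝ} (hD : Measurable D) (hD0 : ∀ ω, 0 ≤ D ω)
    (hK : 0 ≤ K) (hlam : 0 < lam) (hβ : 0 < β)
    (htail : ∀ t, 0 < t → μ {ω | D ω ≤ t} ≤ ENNReal.ofReal (K * t ^ β)) :
    ∫ ω, exp (-(lam * D ω)) ∂μ ≤ K * Gamma (β + 1) * lam ^ (-β) := by
  set c := K * lam ^ (-β)
  have hβ' : -1 < β := by linarith
  have hdistrib : ∀ s ∈ Set.Ioi (0 : ℝ), μ {ω | s < exp (-(lam * D ω))}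
      ≤ (Set.Ioo 0 1).indicator (fun s => ENNReal.ofReal (c * (-log s) ^ β)) s := by
    intro s hs
    by_cases hs1 : s < 1
    · rw [Set.indicator_of_mem (show s ∈ Set.Ioo 0 1 from ⟨hs, hs1⟩)]
      exact measure_lt_exp_neg_mul_le hlam htail ⟨hs, hs1⟩
    · have hempty : {ω | s < exp (-(lam * D ω))} = ∅ := Set.eq_empty_of_forall_notMem
        fun ω hω => hs1 (hω.trans_le (exp_le_one_iff.mpr (by nlinarith [hD0 ω])))
      simp [hempty]
  have hlintegral : ∫⁻ s in Set.Ioi 0, μ {ω | s < exp (-(lam * D ω))}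
      ≤ ENNReal.ofReal (c * Gamma (β + 1)) := by
    calc ∫⁻ s in Set.Ioi 0, μ {ω | s < exp (-(lam * D ω))}
        ≤ ∫⁻ s in Set.Ioi 0, (Set.Ioo 0 1).indicator
            (fun s => ENNReal.ofReal (c * (-log s) ^ β)) s :=
          setLIntegral_mono' measurableSet_Ioi hdistrib
      _ = ∫⁻ s in Set.Ioo 0 1, ENNReal.ofReal (c * (-log s) ^ β) := by
          rw [lintegral_indicator measurableSet_Ioo, Measure.restrict_restrict measurableSet_Ioo,
            Set.inter_eq_left.mpr Set.Ioo_subset_Ioi_self]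
      _ = ENNReal.ofReal (c * Gamma (β + 1)) := by
          rw [← ofReal_integral_eq_lintegral_ofReal ((integrableOn_neg_log_rpow hβ').const_mul c)
            (ae_restrict_of_forall_mem measurableSet_Ioo fun s hs =>
              mul_nonneg (by positivity)
                (rpow_nonneg (neg_nonneg.mpr (log_nonpos hs.1.le hs.2.le)) _)),
            integral_const_mul, integral_neg_log_rpow hβ']
  rw [integral_eq_lintegral_of_nonneg_ae (ae_of_all _ fun _ => (exp_pos _).le)
      (by fun_prop : Measurable fun ω => exp (-(lam * D ω))).aestronglyMeasurable,
    lintegral_eq_lintegral_meas_lt μ (ae_of_all _ fun _ => (exp_pos _).le)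
      (by fun_prop : Measurable fun ω => exp (-(lam * D ω))).aemeasurable]
  calc _ ≤ c * Gamma (β + 1) := ENNReal.toReal_le_of_le_ofReal (by positivity) hlintegral
    _ = K * Gamma (β + 1) * lam ^ (-β) := by ring

end TailBound

/-- `L¹(P)` calibration of the barrier score for a box under a tube-mass condition:
with `ε = c₀/λ`, a barrier `ϑ` that is nondecreasing, `[0,1]`-valued, `≡ 1` on
`[0,∞)` and `= e^{λt}` on `(-∞,-ε]`, and a law satisfying
`P(dist(X,∂B) ≤ t) ≤ C t^β` for `t ∈ (0,t₀]`, there is a constant `C'` depending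
only on `β` and `t₀` such that
`E|S_B(X) - 1_B(X)| ≤ (C (d c₀)^β + e^{d c₀}(C Γ(β+1) + C'))·λ^{-β}`. -/
theorem barrier_score_calibration :
    ∀ (β t₀ : ℝ), 0 < β → 0 < t₀ →
    ∃ C' : ℝ,
      ∀ (Ω : Type) (_ : MeasurableSpace Ω) (μ : Measure Ω),
        IsProbabilityMeasure μ →
      ∀ (d : ℕ) (lam c₀ C : ℝ), 1 ≤ lam → 0 < c₀ → 0 < C →
      ∀ (ℓ u : Fin d → ℝ), (∀ j, ℓ j ≤ u j) →
      ∀ (ϑ : ℝ → ℝ), Monotone ϑ → (∀ t, ϑ t ∈ Set.Icc (0 : ℝ) 1) →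
        (∀ t, 0 ≤ t → ϑ t = 1) →
        (∀ t, t ≤ -(c₀ / lam) → ϑ t = Real.exp (lam * t)) →
      ∀ (X : Ω → EuclideanSpace ℝ (Fin d)), Measurable X →
      ∀ (B : Set (EuclideanSpace ℝ (Fin d))),
        B = {x | ∀ j, x j ∈ Set.Icc (ℓ j) (u j)} →
      (∀ t ∈ Set.Ioc (0 : ℝ) t₀,
        μ {ω | Metric.infDist (X ω) (frontier B) ≤ t}
          ≤ ENNReal.ofReal (C * t ^ β)) →
      (∫ ω, |(∏ j, ϑ (u j - X ω j) * ϑ (X ω j - ℓ j))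
              - Set.indicator B (fun _ => (1 : ℝ)) (X ω)| ∂μ)
        ≤ (C * (d * c₀) ^ β
            + Real.exp (d * c₀) * (C * Real.Gamma (β + 1) + C')) * lam ^ (-β) := by
  intro β t₀ hβ ht₀
  refine ⟨t₀ ^ (-β) * Gamma (β + 1), ?_⟩
  intro Ω _ μ _ d lam c₀ C hlam hc₀ hC ℓ u hℓu ϑ _ hϑ hone hexp X hX B hB htube
  subst hB
  have hlam₀ : 0 < lam := one_pos.trans_le hlam
  have hbound := barrier_le_exp hlam₀ hc₀.le (fun t => (hϑ t).2) hexp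
  set D := fun ω => infDist (X ω) (frontier (box ℓ u))
  have hD : Measurable D := (continuous_infDist_pt _).measurable.comp hX
  have hexp_int : Integrable (fun ω => exp (d * c₀) * exp (-(lam * D ω))) μ :=
    (Integrable.of_bound (by fun_prop) 1 (ae_of_all _ fun ω => by
      rw [norm_of_nonneg (exp_pos _).le, exp_le_one_iff, neg_nonpos]
      exact mul_nonneg hlam₀.le infDist_nonneg)).const_mul _
  have htail : ∫ ω, exp (-(lam * D ω)) ∂μ ≤ (C + t₀ ^ (-β)) * Gamma (β + 1) * lam ^ (-β) :=
    integral_exp_neg_mul_le hD (fun _ => infDist_nonneg) (by positivity) hlam₀ hβ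
      fun t ht => measure_le_ofReal_add_rpow_mul_rpow hC.le hβ.le ht₀ htube ht
  calc _ ≤ ∫ ω, exp (d * c₀) * exp (-(lam * D ω)) ∂μ :=
        integral_mono_of_nonneg (ae_of_all _ fun _ => abs_nonneg _) hexp_int (ae_of_all _ fun ω =>
          abs_prod_barrier_sub_indicator_le hϑ hone hlam₀.le hc₀.le hbound hℓu (X ω))
    _ ≤ exp (d * c₀) * ((C + t₀ ^ (-β)) * Gamma (β + 1) * lam ^ (-β)) := by
        rw [integral_const_mul]
        gcongr
    _ = exp (d * c₀) * (C * Gamma (β + 1) + t₀ ^ (-β) * Gamma (β + 1)) * lam ^ (-β) := by ring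
    _ ≤ _ := by
        gcongr
        exact le_add_of_nonneg_left (by positivity)
end
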